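/- ELBO for the soft greedy (softmax) planner: fix τ > 0 and define the planner G^τ by Cat(j; G^τ(z, x)) = exp( (1/τ) log Cat(z^j; D^j(x)) ) / C^τ(z, x) for masked j, where C^τ(z, x) = Σ_{i : x^i = m} exp( (1/τ) log Cat(z^i; D^i(x)) ). Let p^τ be the distribution of planner-guided sampling with G^τ, and let r^τ_k(·; x_0) be the step-k law of the reference chain driven by G^τ(x_0, ·). Then for any x_0 ∈ V^L with no masks, log p^τ(x_0) ≥ 𝓔_1(x_0) + 𝓔_2(x_0), where 𝓔_1(x_0) = L · E_{k ~ Unif({0,...,L-1})} E_{x_k ~ r^τ_k(·;x_0)}[ Σ_{i : x_k^i = m} Cat(i; G^τ(x_0, x_k)) · log Cat( x_0^i; D^i(x_k) ) ] and 𝓔_2(x_0) = L · E_{k ~ Unif({0,...,L-1})} E_{x_k ~ r^τ_k(·;x_0)} E_{z ~ D(x_k)}[ Σ_{i : x_k^i = m} Cat(i; G^τ(x_0, x_k)) · log( C^τ(x_0, x_k) / C^τ(z^{-i,x_0^i}, x_k) ) ]. -/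

import Mathlib

open Finset

/-- The normalizing constant of the soft greedy planner:
`C^τ(z, x) = Σ_{i : x^i = m} exp((1/τ) log Cat(z^i; D^i(x)))`. -/
noncomputable def Ctau {V : Type*} [Fintype V] [DecidableEq V] {L : ℕ}
    (τ : ℝ) (D : (Fin L → V) → Fin L → V → ℝ) (mask : V)
    (z x : Fin L → V) : ℝ :=
  ∑ i ∈ Finset.univ.filter (fun i : Fin L => x i = mask),
    Real.exp ((1 / τ) * Real.log (D x i (z i)))

/-- The soft greedy (softmax) planner:
`Cat(j; G^τ(z, x)) = exp((1/τ) log Cat(z^j; D^j(x))) / C^τ(z, x)` for masked `j`. -/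
noncomputable def Gtau {V : Type*} [Fintype V] [DecidableEq V] {L : ℕ}
    (τ : ℝ) (D : (Fin L → V) → Fin L → V → ℝ) (mask : V)
    (z x : Fin L → V) (j : Fin L) : ℝ :=
  if x j = mask then
    Real.exp ((1 / τ) * Real.log (D x j (z j))) / Ctau τ D mask z x
  else 0

/-- One step of planner-guided sampling. -/
noncomputable def stepKernel {V : Type*} [Fintype V] [DecidableEq V] {L : ℕ}
    (D : (Fin L → V) → Fin L → V → ℝ)
    (G : (Fin L → V) → (Fin L → V) → Fin L → ℝ)
    (x w : Fin L → V) : ℝ :=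
  ∑ z : Fin L → V, (∏ j, D x j (z j)) *
    ∑ i ∈ Finset.univ.filter (fun i : Fin L => Function.update x i (z i) = w), G z x i

/-- The distribution of the state after `k` steps of planner-guided sampling,
starting from the fully masked sequence; `sampleDist D G mask L` is `p^G`. -/
noncomputable def sampleDist {V : Type*} [Fintype V] [DecidableEq V] {L : ℕ}
    (D : (Fin L → V) → Fin L → V → ℝ)
    (G : (Fin L → V) → (Fin L → V) → Fin L → ℝ)
    (mask : V) : ℕ → (Fin L → V) → ℝ
  | 0, w => if w = (fun _ => mask) then (1 : ℝ) else 0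
  | k + 1, w => ∑ x : Fin L → V, sampleDist D G mask k x * stepKernel D G x w

/-- The step-`k` law `r_k(·; x₀)` of the reference chain driven by the planner
`G(x₀, ·)`: starting from the fully masked sequence, at each step a masked coordinate
`i` is selected with probability `Cat(i; G(x₀, x))` and set to `x₀ i`. -/
noncomputable def refDist {V : Type*} [Fintype V] [DecidableEq V] {L : ℕ}
    (G : (Fin L → V) → (Fin L → V) → Fin L → ℝ)
    (mask : V) (x0 : Fin L → V) : ℕ → (Fin L → V) → ℝ
  | 0, w => if w = (fun _ => mask) then (1 : ℝ) else 0
  | k + 1, w => ∑ x : Fin L → V,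
      refDist G mask x0 k x *
        ∑ i ∈ Finset.univ.filter
            (fun i : Fin L => x i = mask ∧ Function.update x i (x0 i) = w),
          G x0 x i

/-!
Compare the sampler with the reference chain, which reveals `x₀` one masked coordinate at a
time. Since the reference chain reaches `x₀` with probability one after `L` steps, `log p(x₀)` is
minus the Kullback–Leibler divergence of the reference law `r_L` from the sampler law `p_L`, and
the log-sum inequality (data processing along one step of both chains) bounds it below by the
sum over the steps of the expected log-ratio of the two transition kernels. For the softmax
planner, revealing `x₀ⁱ` has sampler probability at least `Cat(x₀ⁱ; Dⁱ) · E_z G^τ(z^{-i,x₀ⁱ}, x)ⁱ`,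
and Jensen's inequality for `log`, applied to this expectation, produces the two terms
`𝓔₁` and `𝓔₂`.
-/

lemma Nat.cast_mul_inv_mul_sum_range (n : ℕ) (f : ℕ → ℝ) :
    (n : ℝ) * ((n : ℝ)⁻¹ * ∑ k ∈ range n, f k) = ∑ k ∈ range n, f k := by
  rcases n.eq_zero_or_pos with rfl | hn
  · simp
  · exact mul_inv_cancel_left₀ (Nat.cast_ne_zero.2 hn.ne') _

section LogSum

lemma mul_log_div_sub_mul_log_div_le {a b A B : ℝ} (ha : 0 ≤ a) (hb : 0 ≤ b)
    (hab : 0 < b → 0 < a) (hA : 0 < A) (hB : 0 < B) :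
    b * Real.log (a / b) - b * Real.log (A / B) ≤ a * B / A - b := by
  rcases hb.eq_or_lt with rfl | hb
  · simp only [zero_mul, sub_zero]
    positivity
  have ha := hab hb
  calc b * Real.log (a / b) - b * Real.log (A / B) = b * Real.log (a * B / (b * A)) := by
        rw [← mul_sub, ← Real.log_div (by positivity) (by positivity)]
        congr 2
        field_simp
    _ ≤ b * (a * B / (b * A) - 1) :=
        mul_le_mul_of_nonneg_left (Real.log_le_sub_one_of_pos (by positivity)) hb.le
    _ = a * B / A - b := by field_simp

theorem sum_mul_log_div_le_sum_mul_log_div_sum {ι : Type*} (s : Finset ι) (a b : ι → ℝ)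
    (ha : ∀ x ∈ s, 0 ≤ a x) (hb : ∀ x ∈ s, 0 ≤ b x) (hab : ∀ x ∈ s, 0 < b x → 0 < a x) :
    ∑ x ∈ s, b x * Real.log (a x / b x)
      ≤ (∑ x ∈ s, b x) * Real.log ((∑ x ∈ s, a x) / ∑ x ∈ s, b x) := by
  rcases (sum_nonneg hb).eq_or_lt with hB | hB
  · rw [← hB, zero_mul]
    refine (sum_eq_zero fun x hx => ?_).le
    rw [(sum_eq_zero_iff_of_nonneg hb).1 hB.symm x hx, zero_mul]
  obtain ⟨x, hx, hbx⟩ := exists_lt_of_sum_lt (f := fun _ => (0 : ℝ)) (by simpa using hB)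
  have hA : 0 < ∑ x ∈ s, a x := sum_pos' ha ⟨x, hx, hab x hx hbx⟩
  have key := sum_le_sum fun x hx =>
    mul_log_div_sub_mul_log_div_le (ha x hx) (hb x hx) (hab x hx) hA hB
  rw [sum_sub_distrib, sum_sub_distrib, ← sum_mul, ← sum_div, ← sum_mul,
    mul_div_cancel_left₀ _ hA.ne'] at key
  linarith

end LogSum

section MarkovChain

variable {α : Type*} [Fintype α]

lemma mul_mul_log_mul_div_mul {a b c d : ℝ} (hab : 0 < b → 0 < a) (hcd : 0 < d → 0 < c)
    (hb : 0 ≤ b) (hd : 0 ≤ d) :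
    b * d * Real.log (a * c / (b * d))
      = d * (b * Real.log (a / b)) + b * (d * Real.log (c / d)) := by
  rcases hb.eq_or_lt with rfl | hb
  · simp
  rcases hd.eq_or_lt with rfl | hd
  · simp
  rw [mul_div_mul_comm, Real.log_mul (div_pos (hab hb) hb).ne' (div_pos (hcd hd) hd).ne']
  ring

/-- One step of the data-processing inequality, for `μ, ν` pushed forward along `P, Q`. -/
theorem sum_mul_log_div_add_le_of_kernel {μ ν : α → ℝ} {P Q : α → α → ℝ}
    (hμ : ∀ x, 0 ≤ μ x) (hν : ∀ x, 0 ≤ ν x) (hP : ∀ x w, 0 ≤ P x w) (hQ : ∀ x w, 0 ≤ Q x w)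
    (hμν : ∀ x, 0 < ν x → 0 < μ x) (hPQ : ∀ x w, 0 < Q x w → 0 < P x w)
    (hQ1 : ∀ x, 0 < ν x → ∑ w, Q x w = 1) :
    ∑ x, ν x * Real.log (μ x / ν x) + ∑ x, ν x * ∑ w, Q x w * Real.log (P x w / Q x w)
      ≤ ∑ w, (∑ x, ν x * Q x w) * Real.log ((∑ x, μ x * P x w) / ∑ x, ν x * Q x w) := by
  have hsplit : ∀ x, ν x * Real.log (μ x / ν x) + ν x * ∑ w, Q x w * Real.log (P x w / Q x w)
      = ∑ w, ν x * Q x w * Real.log (μ x * P x w / (ν x * Q x w)) := by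
    intro x
    have hmass : ν x * Real.log (μ x / ν x) = (∑ w, Q x w) * (ν x * Real.log (μ x / ν x)) := by
      rcases (hν x).eq_or_lt with h | h
      · simp [← h]
      · rw [hQ1 x h, one_mul]
    simp only [mul_mul_log_mul_div_mul (hμν x) (hPQ x _) (hν x) (hQ x _), sum_add_distrib,
      ← sum_mul, ← mul_sum, ← hmass]
  simp only [← sum_add_distrib, hsplit]
  rw [sum_comm]
  exact sum_le_sum fun w _ => sum_mul_log_div_le_sum_mul_log_div_sum _ _ _
    (fun x _ => mul_nonneg (hμ x) (hP x w)) (fun x _ => mul_nonneg (hν x) (hQ x w))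
    fun x _ h => mul_pos (hμν x (pos_of_mul_pos_left h (hQ x w)))
      (hPQ x w (pos_of_mul_pos_right h (hν x)))

variable {P Q : α → α → ℝ} {p q : ℕ → α → ℝ}

lemma nonneg_of_kernel_recursion (hP : ∀ x w, 0 ≤ P x w)
    (hp : ∀ k w, p (k + 1) w = ∑ x, p k x * P x w) (h0 : ∀ x, 0 ≤ p 0 x) :
    ∀ k x, 0 ≤ p k x
  | 0, x => h0 x
  | k + 1, w => by
    rw [hp]
    exact sum_nonneg fun x _ => mul_nonneg (nonneg_of_kernel_recursion hP hp h0 k x) (hP x w)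

lemma pos_of_pos_of_kernel_recursion (hP : ∀ x w, 0 ≤ P x w) (hQ : ∀ x w, 0 ≤ Q x w)
    (hPQ : ∀ x w, 0 < Q x w → 0 < P x w)
    (hp : ∀ k w, p (k + 1) w = ∑ x, p k x * P x w) (hq : ∀ k w, q (k + 1) w = ∑ x, q k x * Q x w)
    (h0 : p 0 = q 0) (hq0 : ∀ x, 0 ≤ q 0 x) :
    ∀ k x, 0 < q k x → 0 < p k x
  | 0, x, h => h0 ▸ h
  | k + 1, w, h => by
    have hq_nonneg := nonneg_of_kernel_recursion hQ hq hq0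
    have hp_nonneg := nonneg_of_kernel_recursion hP hp (h0 ▸ hq0)
    rw [hq] at h
    obtain ⟨x, -, hx⟩ := exists_lt_of_sum_lt (f := fun _ => (0 : ℝ)) (by simpa using h)
    have hqx := pos_of_mul_pos_left hx (hQ x w)
    have hQx := pos_of_mul_pos_right hx (hq_nonneg k x)
    rw [hp]
    exact lt_of_lt_of_le
      (mul_pos (pos_of_pos_of_kernel_recursion hP hQ hPQ hp hq h0 hq0 k x hqx) (hPQ x w hQx))
      (single_le_sum (fun y _ => mul_nonneg (hp_nonneg k y) (hP y w)) (mem_univ x))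

/-- Chain rule along two Markov chains with common initial law: `-KL(q_n ‖ p_n)` dominates the
accumulated expected log-ratios of the kernels. -/
theorem sum_range_le_sum_mul_log_div (hP : ∀ x w, 0 ≤ P x w) (hQ : ∀ x w, 0 ≤ Q x w)
    (hPQ : ∀ x w, 0 < Q x w → 0 < P x w)
    (hp : ∀ k w, p (k + 1) w = ∑ x, p k x * P x w) (hq : ∀ k w, q (k + 1) w = ∑ x, q k x * Q x w)
    (h0 : p 0 = q 0) (hq0 : ∀ x, 0 ≤ q 0 x) (n : ℕ)
    (hQ1 : ∀ k < n, ∀ x, 0 < q k x → ∑ w, Q x w = 1) :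
    ∑ k ∈ range n, ∑ x, q k x * ∑ w, Q x w * Real.log (P x w / Q x w)
      ≤ ∑ x, q n x * Real.log (p n x / q n x) := by
  induction n with
  | zero => simp [h0]
  | succ n ih =>
    rw [sum_range_succ]
    simp only [hp n, hq n]
    refine le_trans (add_le_add_left (ih fun k hk => hQ1 k (by omega)) _) ?_
    exact sum_mul_log_div_add_le_of_kernel (nonneg_of_kernel_recursion hP hp (h0 ▸ hq0) n)
      (nonneg_of_kernel_recursion hQ hq hq0 n) hP hQ
      (pos_of_pos_of_kernel_recursion hP hQ hPQ hp hq h0 hq0 n) hPQ (hQ1 n (by omega))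

end MarkovChain

section ProductWeights

variable {ι β : Type*} [Fintype ι] [DecidableEq ι] [Fintype β]

theorem mul_sum_prod_mul_update [DecidableEq β] (w : ι → β → ℝ) (F : (ι → β) → ℝ) (i : ι)
    (a : β) :
    w i a * ∑ z : ι → β, (∏ j, w j (z j)) * F (Function.update z i a)
      = (∑ y, w i y) * ∑ z : ι → β, (∏ j, w j (z j)) * if z i = a then F z else 0 := by
  set e := Equiv.funSplitAt i β
  have hsplit : ∀ f : (ι → β) → ℝ, ∑ z, f z = ∑ y, ∑ r, f (e.symm (y, r)) := fun f => by
    rw [← Fintype.sum_prod_type', e.symm.sum_comp]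
  have hprod : ∀ y r, ∏ j, w j (e.symm (y, r) j) = w i y * ∏ j : {j // j ≠ i}, w j (r j) := by
    intro y r
    rw [Fintype.prod_eq_mul_prod_subtype_ne _ i]
    simp only [e, Equiv.funSplitAt_symm_apply, dite_true]
    congr 1
    exact prod_congr rfl fun j _ => by rw [dif_neg j.2]
  have hupd : ∀ y r, Function.update (e.symm (y, r)) i a = e.symm (a, r) := by
    intro y r
    ext j
    by_cases hj : j = i <;> simp [e, hj, Equiv.funSplitAt_symm_apply]
  have hi : ∀ y r, e.symm (y, r) i = y := by simp [e, Equiv.funSplitAt_symm_apply]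
  simp only [hsplit, hprod, hupd, hi]
  simp only [mul_assoc, mul_sum, mul_ite, mul_zero, sum_ite_irrel, sum_const_zero, sum_ite_eq',
    mem_univ, if_true, mul_left_comm, sum_mul]
  exact sum_comm

lemma sum_prod_eq_one (w : ι → β → ℝ) (hw : ∀ i, ∑ y, w i y = 1) :
    ∑ z : ι → β, ∏ j, w j (z j) = 1 := by
  rw [← Fintype.prod_sum]
  simp [hw]

end ProductWeights

section ReferenceChain

variable {V : Type*} [DecidableEq V] {L : ℕ}
  {G : (Fin L → V) → (Fin L → V) → Fin L → ℝ} {mask : V} {x0 : Fin L → V}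

noncomputable def refKernel (G : (Fin L → V) → (Fin L → V) → Fin L → ℝ) (mask : V)
    (x0 x w : Fin L → V) : ℝ :=
  ∑ i ∈ univ.filter (fun i : Fin L => x i = mask ∧ Function.update x i (x0 i) = w), G x0 x i

lemma refKernel_nonneg (hG : ∀ x i, 0 ≤ G x0 x i) (x w : Fin L → V) :
    0 ≤ refKernel G mask x0 x w :=
  sum_nonneg fun i _ => hG x i

lemma refKernel_update (hx0 : ∀ i, x0 i ≠ mask) {x : Fin L → V} {i : Fin L} (hi : x i = mask) :
    refKernel G mask x0 x (Function.update x i (x0 i)) = G x0 x i := by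
  rw [refKernel, sum_eq_single_of_mem i (by simp [hi])]
  simp only [mem_filter, mem_univ, true_and, and_imp]
  intro j _ hupd hji
  have := congrFun hupd i
  rw [Function.update_of_ne (Ne.symm hji), Function.update_self] at this
  exact absurd (this ▸ hi) (hx0 i)

variable [Fintype V]

lemma refDist_succ (k : ℕ) (w : Fin L → V) :
    refDist G mask x0 (k + 1) w = ∑ x, refDist G mask x0 k x * refKernel G mask x0 x w :=
  rfl

lemma sum_refKernel_mul (x : Fin L → V) (f : (Fin L → V) → ℝ) :
    ∑ w, refKernel G mask x0 x w * f w
      = ∑ i ∈ univ.filter (fun i : Fin L => x i = mask),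
          G x0 x i * f (Function.update x i (x0 i)) := by
  simp only [refKernel, sum_mul, sum_filter]
  rw [sum_comm]
  refine sum_congr rfl fun i _ => ?_
  by_cases hi : x i = mask <;> simp [hi]

lemma sum_refKernel (hG1 : ∀ x, (∃ i, x i = mask) →
      ∑ i ∈ univ.filter (fun i : Fin L => x i = mask), G x0 x i = 1)
    {x : Fin L → V} (hx : ∃ i, x i = mask) :
    ∑ w, refKernel G mask x0 x w = 1 := by
  simpa [hG1 x hx] using sum_refKernel_mul (G := G) (x0 := x0) (mask := mask) x 1

lemma refDist_support (hx0 : ∀ i, x0 i ≠ mask) {k : ℕ} {w : Fin L → V}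
    (h : refDist G mask x0 k w ≠ 0) :
    (∀ i, w i ≠ mask → w i = x0 i) ∧ (univ.filter fun i => w i = mask).card + k = L := by
  induction k generalizing w with
  | zero =>
    simp only [refDist, ne_eq, ite_eq_right_iff, not_forall] at h
    obtain ⟨rfl, -⟩ := h
    simp
  | succ k ih =>
    obtain ⟨x, -, hx⟩ := exists_ne_zero_of_sum_ne_zero h
    obtain ⟨hqx, hKx⟩ := mul_ne_zero_iff.1 hx
    obtain ⟨i, hi, -⟩ := exists_ne_zero_of_sum_ne_zero hKx
    simp only [mem_filter, mem_univ, true_and] at hi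
    obtain ⟨hxi, rfl⟩ := hi
    obtain ⟨hfix, hcard⟩ := ih hqx
    refine ⟨fun j hj => ?_, ?_⟩
    · by_cases hji : j = i
      · subst hji
        simp
      · rw [Function.update_of_ne hji] at hj ⊢
        exact hfix j hj
    · have herase : (univ.filter fun j => Function.update x i (x0 i) j = mask)
          = (univ.filter fun j => x j = mask).erase i := by
        ext j
        by_cases hji : j = i <;> simp [hji, hx0]
      have hmem : i ∈ univ.filter fun j => x j = mask := by simpa using hxi
      rw [herase, card_erase_of_mem hmem]
      have := card_pos.2 ⟨i, hmem⟩
      omega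

lemma exists_mask_of_refDist_ne_zero (hx0 : ∀ i, x0 i ≠ mask) {k : ℕ} (hk : k < L)
    {x : Fin L → V} (h : refDist G mask x0 k x ≠ 0) : ∃ i, x i = mask := by
  have hcard := (refDist_support hx0 h).2
  obtain ⟨i, hi⟩ := card_pos.1 (show 0 < (univ.filter fun i => x i = mask).card by omega)
  exact ⟨i, (mem_filter.1 hi).2⟩

lemma refDist_nonneg (hG : ∀ x i, 0 ≤ G x0 x i) : ∀ k w, 0 ≤ refDist G mask x0 k w :=
  nonneg_of_kernel_recursion (refKernel_nonneg hG) refDist_succ fun w => by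
    simp only [refDist]
    split_ifs <;> norm_num

lemma sum_refDist (hx0 : ∀ i, x0 i ≠ mask) (hG1 : ∀ x, (∃ i, x i = mask) →
      ∑ i ∈ univ.filter (fun i : Fin L => x i = mask), G x0 x i = 1) :
    ∀ k ≤ L, ∑ w, refDist G mask x0 k w = 1
  | 0, _ => by simp [refDist]
  | k + 1, hk => by
    simp only [refDist_succ, ← mul_sum (s := univ), sum_comm (s := univ) (t := univ)]
    rw [← sum_refDist hx0 hG1 k (by omega)]
    refine sum_congr rfl fun x _ => ?_
    by_cases hx : refDist G mask x0 k x = 0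
    · simp [hx]
    · rw [sum_refKernel hG1 (exists_mask_of_refDist_ne_zero hx0 (by omega) hx), mul_one]

lemma refDist_length (hx0 : ∀ i, x0 i ≠ mask) (hG1 : ∀ x, (∃ i, x i = mask) →
      ∑ i ∈ univ.filter (fun i : Fin L => x i = mask), G x0 x i = 1) (w : Fin L → V) :
    refDist G mask x0 L w = if w = x0 then 1 else 0 := by
  have hzero : ∀ w ≠ x0, refDist G mask x0 L w = 0 := by
    intro w hw
    by_contra h
    obtain ⟨hfix, hcard⟩ := refDist_support hx0 h
    have hnomask : ∀ i, w i ≠ mask := fun i hi =>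
      (card_pos.2 ⟨i, mem_filter.2 ⟨mem_univ i, hi⟩⟩).ne' (by simpa using hcard)
    exact hw (funext fun i => hfix i (hnomask i))
  split_ifs with hw
  · subst hw
    rw [← sum_refDist hx0 hG1 L le_rfl, sum_eq_single w (fun v _ hv => hzero v hv) (by simp)]
  · exact hzero w hw

end ReferenceChain

section Sampler

variable {V : Type*} [Fintype V] [DecidableEq V] {L : ℕ}
  {D : (Fin L → V) → Fin L → V → ℝ} {G : (Fin L → V) → (Fin L → V) → Fin L → ℝ} {mask : V}

lemma stepKernel_nonneg (hD : ∀ x i y, 0 ≤ D x i y) (hG : ∀ z x i, 0 ≤ G z x i)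
    (x w : Fin L → V) : 0 ≤ stepKernel D G x w :=
  sum_nonneg fun z _ => mul_nonneg (prod_nonneg fun j _ => hD x j (z j))
    (sum_nonneg fun i _ => hG z x i)

/-- The sampler can follow any reference transition, by drawing `z = x0`. -/
lemma prod_mul_refKernel_le_stepKernel (hD : ∀ x i y, 0 ≤ D x i y) (hG : ∀ z x i, 0 ≤ G z x i)
    (x0 x w : Fin L → V) :
    (∏ j, D x j (x0 j)) * refKernel G mask x0 x w ≤ stepKernel D G x w := by
  have hterm := single_le_sum (f := fun z => (∏ j, D x j (z j)) *
      ∑ i ∈ univ.filter (fun i => Function.update x i (z i) = w), G z x i)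
    (fun z _ => mul_nonneg (prod_nonneg fun j _ => hD x j (z j))
      (sum_nonneg fun i _ => hG z x i)) (mem_univ x0)
  refine le_trans (mul_le_mul_of_nonneg_left ?_ (prod_nonneg fun j _ => hD x j (x0 j))) hterm
  exact sum_le_sum_of_subset_of_nonneg (fun _ => by simp +contextual) fun i _ _ => hG x0 x i

lemma mul_sum_prod_mul_le_stepKernel (hD : ∀ x i y, 0 ≤ D x i y)
    (hD1 : ∀ x i, ∑ y, D x i y = 1) (hG : ∀ z x i, 0 ≤ G z x i) (x : Fin L → V) (i : Fin L)
    (a : V) :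
    D x i a * ∑ z, (∏ j, D x j (z j)) * G (Function.update z i a) x i
      ≤ stepKernel D G x (Function.update x i a) := by
  rw [mul_sum_prod_mul_update (D x) (fun z => G z x i), hD1, one_mul]
  refine sum_le_sum fun z _ => mul_le_mul_of_nonneg_left ?_ (prod_nonneg fun j _ => hD x j (z j))
  split_ifs with hz
  · exact single_le_sum (fun i _ => hG z x i) (by simp [hz])
  · exact sum_nonneg fun i _ => hG z x i

/-- The ELBO of planner-guided sampling, for an arbitrary planner. -/
theorem sum_range_refDist_mul_le_log_sampleDist {x0 : Fin L → V} (hDpos : ∀ x i y, 0 < D x i y)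
    (hG : ∀ z x i, 0 ≤ G z x i)
    (hG1 : ∀ x, (∃ i, x i = mask) →
      ∑ i ∈ univ.filter (fun i : Fin L => x i = mask), G x0 x i = 1)
    (hx0 : ∀ i, x0 i ≠ mask) :
    ∑ k ∈ range L, ∑ x, refDist G mask x0 k x *
        ∑ i ∈ univ.filter (fun i : Fin L => x i = mask),
          G x0 x i * Real.log (stepKernel D G x (Function.update x i (x0 i)) / G x0 x i)
      ≤ Real.log (sampleDist D G mask L x0) := by
  have hD : ∀ x i y, 0 ≤ D x i y := fun x i y => (hDpos x i y).le
  have hchain := sum_range_le_sum_mul_log_div (p := sampleDist D G mask) (q := refDist G mask x0)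
    (stepKernel_nonneg hD hG)
    (refKernel_nonneg fun x i => hG x0 x i)
    (fun x w h => lt_of_lt_of_le (mul_pos (prod_pos fun j _ => hDpos x j (x0 j)) h)
      (prod_mul_refKernel_le_stepKernel hD hG x0 x w))
    (fun _ _ => rfl) refDist_succ (funext fun _ => rfl) (refDist_nonneg (fun x i => hG x0 x i) 0)
    L fun k hk x hx => sum_refKernel hG1 (exists_mask_of_refDist_ne_zero hx0 hk hx.ne')
  simp only [refDist_length hx0 hG1, ite_mul, one_mul, zero_mul, sum_ite_eq', mem_univ,
    if_true, div_one] at hchain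
  refine le_trans (le_of_eq ?_) hchain
  refine sum_congr rfl fun k _ => sum_congr rfl fun x _ => ?_
  rw [sum_refKernel_mul]
  refine congrArg _ (sum_congr rfl fun i hi => ?_)
  rw [refKernel_update hx0 (mem_filter.1 hi).2]

end Sampler

section SoftGreedy

variable {V : Type*} [Fintype V] [DecidableEq V] {L : ℕ} (τ : ℝ)
  (D : (Fin L → V) → Fin L → V → ℝ) (mask : V)

lemma Ctau_pos (z : Fin L → V) {x : Fin L → V} {i : Fin L} (hi : x i = mask) :
    0 < Ctau τ D mask z x :=
  sum_pos' (fun _ _ => (Real.exp_pos _).le) ⟨i, by simp [hi], Real.exp_pos _⟩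

lemma Gtau_nonneg (z x : Fin L → V) (j : Fin L) : 0 ≤ Gtau τ D mask z x j := by
  unfold Gtau
  split_ifs with hj
  · exact div_nonneg (Real.exp_pos _).le (Ctau_pos τ D mask z hj).le
  · exact le_rfl

lemma Gtau_pos (z : Fin L → V) {x : Fin L → V} {j : Fin L} (hj : x j = mask) :
    0 < Gtau τ D mask z x j := by
  rw [Gtau, if_pos hj]
  exact div_pos (Real.exp_pos _) (Ctau_pos τ D mask z hj)

lemma sum_Gtau (z x : Fin L → V) (hx : ∃ i, x i = mask) :
    ∑ i ∈ univ.filter (fun i : Fin L => x i = mask), Gtau τ D mask z x i = 1 := by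
  obtain ⟨i, hi⟩ := hx
  rw [sum_congr rfl fun j hj => by rw [Gtau, if_pos (mem_filter.1 hj).2], ← sum_div]
  exact div_self (Ctau_pos τ D mask z hi).ne'

lemma log_Gtau (z : Fin L → V) {x : Fin L → V} {j : Fin L} (hj : x j = mask) :
    Real.log (Gtau τ D mask z x j)
      = 1 / τ * Real.log (D x j (z j)) - Real.log (Ctau τ D mask z x) := by
  rw [Gtau, if_pos hj, Real.log_div (Real.exp_pos _).ne' (Ctau_pos τ D mask z hj).ne',
    Real.log_exp]

theorem log_add_sum_mul_log_div_Ctau_le (hDpos : ∀ x i y, 0 < D x i y)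
    (hD1 : ∀ x i, ∑ y, D x i y = 1) (x0 x : Fin L → V) {i : Fin L} (hi : x i = mask) :
    Real.log (D x i (x0 i)) + ∑ z, (∏ j, D x j (z j)) *
        Real.log (Ctau τ D mask x0 x / Ctau τ D mask (Function.update z i (x0 i)) x)
      ≤ Real.log (stepKernel D (Gtau τ D mask) x (Function.update x i (x0 i)) /
          Gtau τ D mask x0 x i) := by
  set a := x0 i
  set π : (Fin L → V) → ℝ := fun z => ∏ j, D x j (z j)
  set E := ∑ z, π z * Gtau τ D mask (Function.update z i a) x i
  have hπ : ∀ z, 0 < π z := fun z => prod_pos fun j _ => hDpos x j (z j)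
  have hπ1 : ∑ z, π z = 1 := sum_prod_eq_one (D x) (hD1 x)
  have hG0 := Gtau_pos τ D mask x0 hi
  have hE : 0 < E := sum_pos' (fun z _ => (mul_pos (hπ z) (Gtau_pos τ D mask _ hi)).le)
    ⟨x0, mem_univ _, mul_pos (hπ x0) (Gtau_pos τ D mask _ hi)⟩
  have hstep := mul_sum_prod_mul_le_stepKernel (fun x i y => (hDpos x i y).le) hD1
    (Gtau_nonneg τ D mask) x i a
  have hjensen : ∑ z, π z * Real.log (Gtau τ D mask (Function.update z i a) x i) ≤ Real.log E :=
    strictConcaveOn_log_Ioi.concaveOn.le_map_sum (fun z _ => (hπ z).le) hπ1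
      fun z _ => Gtau_pos τ D mask _ hi
  have hlog : ∀ z, Real.log (Gtau τ D mask (Function.update z i a) x i)
      = 1 / τ * Real.log (D x i a) - Real.log (Ctau τ D mask (Function.update z i a) x) := by
    intro z
    rw [log_Gtau τ D mask _ hi, Function.update_self]
  calc Real.log (D x i a) + ∑ z, π z *
          Real.log (Ctau τ D mask x0 x / Ctau τ D mask (Function.update z i a) x)
      = Real.log (D x i a) + ∑ z, π z * Real.log (Gtau τ D mask (Function.update z i a) x i)
          - Real.log (Gtau τ D mask x0 x i) := by
        simp only [hlog, log_Gtau τ D mask x0 hi, Real.log_div (Ctau_pos τ D mask _ hi).ne'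
          (Ctau_pos τ D mask _ hi).ne', mul_sub, sum_sub_distrib, ← sum_mul, hπ1]
        ring
    _ ≤ Real.log (D x i a) + Real.log E - Real.log (Gtau τ D mask x0 x i) := by gcongr
    _ = Real.log (D x i a * E / Gtau τ D mask x0 x i) := by
        rw [Real.log_div (mul_pos (hDpos x i a) hE).ne' hG0.ne',
          Real.log_mul (hDpos x i a).ne' hE.ne']
    _ ≤ _ := Real.log_le_log (by have := hDpos x i a; positivity)
        (div_le_div_of_nonneg_right hstep hG0.le)

lemma sum_Gtau_mul_log_add_le (hDpos : ∀ x i y, 0 < D x i y)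
    (hD1 : ∀ x i, ∑ y, D x i y = 1) (x0 x : Fin L → V) :
    ∑ i ∈ univ.filter (fun i : Fin L => x i = mask),
        Gtau τ D mask x0 x i * Real.log (D x i (x0 i))
      + ∑ z, (∏ j, D x j (z j)) * ∑ i ∈ univ.filter (fun i : Fin L => x i = mask),
          Gtau τ D mask x0 x i *
            Real.log (Ctau τ D mask x0 x / Ctau τ D mask (Function.update z i (x0 i)) x)
      ≤ ∑ i ∈ univ.filter (fun i : Fin L => x i = mask), Gtau τ D mask x0 x i *
          Real.log (stepKernel D (Gtau τ D mask) x (Function.update x i (x0 i)) /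
            Gtau τ D mask x0 x i) := by
  simp only [mul_sum (s := univ.filter _), sum_comm (s := univ) (t := univ.filter _),
    mul_left_comm _ (Gtau τ D mask x0 x _), ← mul_sum (s := univ), ← sum_add_distrib, ← mul_add]
  exact sum_le_sum fun i hi => mul_le_mul_of_nonneg_left
    (log_add_sum_mul_log_div_Ctau_le τ D mask hDpos hD1 x0 x (mem_filter.1 hi).2)
    (Gtau_nonneg τ D mask x0 x i)

end SoftGreedy

theorem soft_greedy_planner_elbo_general
    {V : Type*} [Fintype V] [DecidableEq V] {L : ℕ}
    (mask : V) (τ : ℝ)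
    (D : (Fin L → V) → Fin L → V → ℝ)
    (hDpos : ∀ x i y, 0 < D x i y) (hD1 : ∀ x i, ∑ y, D x i y = 1)
    (x0 : Fin L → V) (hx0 : ∀ i, x0 i ≠ mask) :
    Real.log (sampleDist D (Gtau τ D mask) mask L x0)
      ≥ (L : ℝ) * ((L : ℝ)⁻¹ * ∑ k ∈ Finset.range L, ∑ x : Fin L → V,
          refDist (Gtau τ D mask) mask x0 k x *
            ∑ i ∈ Finset.univ.filter (fun i : Fin L => x i = mask),
              Gtau τ D mask x0 x i * Real.log (D x i (x0 i)))
        + (L : ℝ) * ((L : ℝ)⁻¹ * ∑ k ∈ Finset.range L, ∑ x : Fin L → V,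
            refDist (Gtau τ D mask) mask x0 k x *
              ∑ z : Fin L → V, (∏ j, D x j (z j)) *
                ∑ i ∈ Finset.univ.filter (fun i : Fin L => x i = mask),
                  Gtau τ D mask x0 x i *
                    Real.log (Ctau τ D mask x0 x /
                      Ctau τ D mask (Function.update z i (x0 i)) x)) := by
  rw [ge_iff_le, Nat.cast_mul_inv_mul_sum_range, Nat.cast_mul_inv_mul_sum_range,
    ← sum_add_distrib]
  refine le_trans (sum_le_sum fun k _ => ?_) (sum_range_refDist_mul_le_log_sampleDist hDpos
    (Gtau_nonneg τ D mask) (sum_Gtau τ D mask x0) hx0)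
  rw [← sum_add_distrib]
  exact sum_le_sum fun x _ => by
    rw [← mul_add]
    exact mul_le_mul_of_nonneg_left (sum_Gtau_mul_log_add_le τ D mask hDpos hD1 x0 x)
      (refDist_nonneg (fun x i => Gtau_nonneg τ D mask x0 x i) k x)

/-- **ELBO for the soft greedy (softmax) planner.**  For `τ > 0` and a denoiser `D`
(strictly positive, so that all logarithms are of positive quantities), with `p^τ`
the distribution of planner-guided sampling with `G^τ` and `r^τ_k(·; x₀)` the step-`k`
law of the reference chain driven by `G^τ(x₀, ·)`, for any mask-free `x₀`:
`log p^τ(x₀) ≥ 𝓔₁(x₀) + 𝓔₂(x₀)` with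
`𝓔₁(x₀) = L·E_k E_{x_k ~ r^τ_k}[Σ_{i : x_k^i=m} Cat(i;G^τ(x₀,x_k)) log Cat(x₀^i;D^i(x_k))]`,
`𝓔₂(x₀) = L·E_k E_{x_k ~ r^τ_k} E_{z ~ D(x_k)}[Σ_{i : x_k^i=m} Cat(i;G^τ(x₀,x_k)) log(C^τ(x₀,x_k)/C^τ(z^{-i,x₀^i},x_k))]`. -/
theorem soft_greedy_planner_elbo
    {V : Type*} [Fintype V] [DecidableEq V] {L : ℕ}
    (mask : V) (τ : ℝ) (hτ : 0 < τ)
    (D : (Fin L → V) → Fin L → V → ℝ)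
    (hDpos : ∀ x i y, 0 < D x i y) (hD1 : ∀ x i, ∑ y, D x i y = 1)
    (x0 : Fin L → V) (hx0 : ∀ i, x0 i ≠ mask) :
    Real.log (sampleDist D (Gtau τ D mask) mask L x0)
      ≥ (L : ℝ) * ((L : ℝ)⁻¹ * ∑ k ∈ Finset.range L, ∑ x : Fin L → V,
          refDist (Gtau τ D mask) mask x0 k x *
            ∑ i ∈ Finset.univ.filter (fun i : Fin L => x i = mask),
              Gtau τ D mask x0 x i * Real.log (D x i (x0 i)))
        + (L : ℝ) * ((L : ℝ)⁻¹ * ∑ k ∈ Finset.range L, ∑ x : Fin L → V,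
            refDist (Gtau τ D mask) mask x0 k x *
              ∑ z : Fin L → V, (∏ j, D x j (z j)) *
                ∑ i ∈ Finset.univ.filter (fun i : Fin L => x i = mask),
                  Gtau τ D mask x0 x i *
                    Real.log (Ctau τ D mask x0 x /
                      Ctau τ D mask (Function.update z i (x0 i)) x)) :=
  soft_greedy_planner_elbo_general mask τ D hDpos hD1 x0 hx0
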